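/- Let n ≥ 2 and let i ∈ I_n with e(i) ≠ 0 in the cyclotomic KLR algebra R_n. Then y_k e(i) = 0 in R_n for every k with 1 ≤ k ≤ n−1. -/
import Mathlib


open scoped BigOperators

/-- `I_n`: the sequences `(i_1,…,i_n)` of elements of `ZMod n` that are permutations of
`(0,1,…,n−1)`, encoded as bijections `Fin n → ZMod n` (position `k : Fin n` is the
0-based version of the paper's position `k+1`). -/
def KLRSeq (n : ℕ) : Type := {f : Fin n → ZMod n // Function.Bijective f}

instance (n : ℕ) : Finite (KLRSeq n) := by
  unfold KLRSeq
  rcases Nat.eq_zero_or_pos n with h | h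
  · subst h
    have : IsEmpty {f : Fin 0 → ZMod 0 // Function.Bijective f} := by
      constructor
      rintro ⟨f, hf⟩
      obtain ⟨x, -⟩ := hf.2 0
      exact x.elim0
    infer_instance
  · haveI : NeZero n := ⟨by omega⟩
    infer_instance

noncomputable instance (n : ℕ) : Fintype (KLRSeq n) := Fintype.ofFinite _

noncomputable instance (n : ℕ) : DecidableEq (KLRSeq n) := Classical.decEq _

/-- Generators of the KLR algebra: idempotents `e(i)`, dots `y_k`, crossings `ψ_k`. -/
inductive KLRGen (n : ℕ) : Type
  | e : KLRSeq n → KLRGen n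
  | y : Fin n → KLRGen n
  | psi : Fin (n - 1) → KLRGen n

/-- The free algebra on the KLR generators. -/
abbrev KLRFree (K : Type) [Field K] (n : ℕ) := FreeAlgebra K (KLRGen n)

namespace KLR

/-- `e(i)` in the free algebra. -/
def E (K : Type) [Field K] {n : ℕ} (i : KLRSeq n) : KLRFree K n :=
  FreeAlgebra.ι K (KLRGen.e i)

/-- `y_k` in the free algebra. -/
def Y (K : Type) [Field K] {n : ℕ} (k : Fin n) : KLRFree K n :=
  FreeAlgebra.ι K (KLRGen.y k)

/-- `ψ_k` in the free algebra. -/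
def P (K : Type) [Field K] {n : ℕ} (k : Fin (n - 1)) : KLRFree K n :=
  FreeAlgebra.ι K (KLRGen.psi k)

/-- The first strand position crossed by `ψ_k`. -/
def pos0 {n : ℕ} (k : Fin (n - 1)) : Fin n := ⟨k.val, by have := k.isLt; omega⟩

/-- The second strand position crossed by `ψ_k`. -/
def pos1 {n : ℕ} (k : Fin (n - 1)) : Fin n := ⟨k.val + 1, by have := k.isLt; omega⟩

/-- The sequence `s_k · i`, with entries `k` and `k+1` swapped. -/
def swapSeq {n : ℕ} (k : Fin (n - 1)) (i : KLRSeq n) : KLRSeq n :=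
  ⟨i.1 ∘ Equiv.swap (pos0 k) (pos1 k), i.2.comp (Equiv.swap _ _).bijective⟩

/-- The right-hand side of the quadratic relation `ψ_k² e(i) = …`, depending on how the
colors `i_k` and `i_{k+1}` are related in the quiver of affine type A on `ZMod n`
(`a → b` iff `b = a + 1` and `a ≠ b + 1`, etc.). -/
noncomputable def quadTerm (K : Type) [Field K] {n : ℕ} (k : Fin (n - 1)) (i : KLRSeq n) :
    KLRFree K n :=
  let a := i.1 (pos0 k)
  let b := i.1 (pos1 k)
  if b = a + 1 ∧ a = b + 1 then
    (Y K (pos1 k) - Y K (pos0 k)) * ((Y K (pos0 k) - Y K (pos1 k)) * E K i)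
  else if b = a + 1 ∧ a ≠ b + 1 then (Y K (pos1 k) - Y K (pos0 k)) * E K i
  else if a = b + 1 ∧ b ≠ a + 1 then (Y K (pos0 k) - Y K (pos1 k)) * E K i
  else E K i

/-- The defining relations of the cyclotomic KLR algebra `R_n` (for `Λ = Λ_0`):
the KLR relations together with the cyclotomic relations `y_1 e(i) = 0` (if `i_1 = 0`) and
`e(i) = 0` (if `i_1 ≠ 0`). -/
inductive Rel (K : Type) [Field K] (n : ℕ) : KLRFree K n → KLRFree K n → Prop
  | idem (i j : KLRSeq n) : Rel K n (E K i * E K j) (if i = j then E K i else 0)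
  | sum_eq_one : Rel K n (∑ i : KLRSeq n, E K i) 1
  | ye (k : Fin n) (i : KLRSeq n) : Rel K n (Y K k * E K i) (E K i * Y K k)
  | psie (k : Fin (n - 1)) (i : KLRSeq n) :
      Rel K n (P K k * E K i) (E K (swapSeq k i) * P K k)
  | yy (k l : Fin n) : Rel K n (Y K k * Y K l) (Y K l * Y K k)
  | psiy (k : Fin (n - 1)) (l : Fin n) (h : l.val ≠ k.val ∧ l.val ≠ k.val + 1) :
      Rel K n (P K k * Y K l) (Y K l * P K k)
  | psipsi (k l : Fin (n - 1)) (h : k.val + 1 < l.val ∨ l.val + 1 < k.val) :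
      Rel K n (P K k * P K l) (P K l * P K k)
  | psiy1 (k : Fin (n - 1)) (i : KLRSeq n) :
      Rel K n (P K k * (Y K (pos1 k) * E K i)) (Y K (pos0 k) * (P K k * E K i))
  | ypsi (k : Fin (n - 1)) (i : KLRSeq n) :
      Rel K n (Y K (pos1 k) * (P K k * E K i)) (P K k * (Y K (pos0 k) * E K i))
  | sq (k : Fin (n - 1)) (i : KLRSeq n) :
      Rel K n (P K k * (P K k * E K i)) (quadTerm K k i)
  | braid (k : Fin (n - 1)) (h : k.val + 1 < n - 1) (i : KLRSeq n) :
      Rel K n (P K k * (P K ⟨k.val + 1, h⟩ * (P K k * E K i)))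
              (P K ⟨k.val + 1, h⟩ * (P K k * (P K ⟨k.val + 1, h⟩ * E K i)))
  | cyc0 (hn : 0 < n) (i : KLRSeq n) (h : i.1 ⟨0, hn⟩ = 0) :
      Rel K n (Y K ⟨0, hn⟩ * E K i) 0
  | cyc1 (hn : 0 < n) (i : KLRSeq n) (h : i.1 ⟨0, hn⟩ ≠ 0) :
      Rel K n (E K i) 0

end KLR

/-- The cyclotomic KLR algebra `R_n` (quiver of affine type A on `ZMod n`, `α` the sum of
all simple roots, `Λ = Λ_0`): the quotient of the free algebra on the generators by the
two-sided ideal generated by the relation differences and the cyclotomic generators. -/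
abbrev CKLR (K : Type) [Field K] (n : ℕ) := RingQuot (KLR.Rel K n)

namespace KLR

/-- The quotient map from the free algebra to `R_n`. -/
noncomputable def mk (K : Type) [Field K] (n : ℕ) : KLRFree K n →ₐ[K] CKLR K n :=
  RingQuot.mkAlgHom K (Rel K n)

/-- The idempotent `e(i)` in `R_n`. -/
noncomputable def e (K : Type) [Field K] {n : ℕ} (i : KLRSeq n) : CKLR K n := mk K n (E K i)

/-- The dot `y_k` in `R_n`. -/
noncomputable def y (K : Type) [Field K] {n : ℕ} (k : Fin n) : CKLR K n := mk K n (Y K k)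

/-- The crossing `ψ_k` in `R_n`. -/
noncomputable def p (K : Type) [Field K] {n : ℕ} (k : Fin (n - 1)) : CKLR K n := mk K n (P K k)

end KLR

namespace KLR

variable {K : Type} [Field K] {n : ℕ}

lemma mk_rel {x z : KLRFree K n} (h : Rel K n x z) : mk K n x = mk K n z :=
  RingQuot.mkAlgHom_rel K h

lemma p_mul_e (k : Fin (n - 1)) (i : KLRSeq n) :
    p K k * e K i = e K (swapSeq k i) * p K k := by
  have h := mk_rel (K := K) (Rel.psie k i)
  rw [map_mul, map_mul] at h
  exact h

lemma sq_e (k : Fin (n - 1)) (i : KLRSeq n) :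
    p K k * (p K k * e K i) = mk K n (quadTerm K k i) := by
  have h := mk_rel (K := K) (Rel.sq k i)
  rw [map_mul, map_mul] at h
  exact h

lemma ypsi_e (k : Fin (n - 1)) (i : KLRSeq n) :
    y K (pos1 k) * (p K k * e K i) = p K k * (y K (pos0 k) * e K i) := by
  have h := mk_rel (K := K) (Rel.ypsi k i)
  rw [map_mul, map_mul, map_mul, map_mul] at h
  exact h

lemma e_zero_of_ne0 (hn : 0 < n) (i : KLRSeq n) (h : i.1 ⟨0, hn⟩ ≠ 0) : e K i = 0 := by
  have h' := mk_rel (K := K) (Rel.cyc1 hn i h)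
  rw [map_zero] at h'
  exact h'

lemma int_small {z : ℤ} (hd : (n : ℤ) ∣ z) (h1 : -(n : ℤ) < z) (h2 : z < n) : z = 0 := by
  by_contra hz
  have habs : (n : ℤ) ∣ |z| := (dvd_abs _ _).mpr hd
  have hle : (n : ℤ) ≤ |z| := Int.le_of_dvd (abs_pos.mpr hz) habs
  have h5 : |z| < n := abs_lt.mpr ⟨h1, h2⟩
  omega

/-- If the entry at position `m` is nonzero and non-adjacent (and distinct) to every
earlier entry, then `e(i) = 0`. -/
lemma e_zero_of_isolated :
    ∀ (m : ℕ) (hm : m < n) (i : KLRSeq n),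
      i.1 ⟨m, hm⟩ ≠ 0 →
      (∀ r : ℕ, (hr : r < m) → i.1 ⟨m, hm⟩ ≠ i.1 ⟨r, hr.trans hm⟩ + 1 ∧
        i.1 ⟨r, hr.trans hm⟩ ≠ i.1 ⟨m, hm⟩ + 1) →
      e K i = 0 := by
  intro m
  induction m with
  | zero => exact fun hm i h0 _ => e_zero_of_ne0 hm i h0
  | succ m IH =>
    intro hm i h0 hsep
    have hκ : m < n - 1 := by omega
    have hmn : m < n := by omega
    have hpair := hsep m (Nat.lt_succ_self m)
    have hA : ¬ (i.1 (pos1 (⟨m, hκ⟩ : Fin (n - 1))) =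
        i.1 (pos0 (⟨m, hκ⟩ : Fin (n - 1))) + 1) := fun h => hpair.1 h
    have hB : ¬ (i.1 (pos0 (⟨m, hκ⟩ : Fin (n - 1))) =
        i.1 (pos1 (⟨m, hκ⟩ : Fin (n - 1))) + 1) := fun h => hpair.2 h
    have hquad : quadTerm K (⟨m, hκ⟩ : Fin (n - 1)) i = E K i := by
      simp only [quadTerm]
      rw [if_neg (fun h => hA h.1), if_neg (fun h => hA h.1), if_neg (fun h => hB h.1)]
    have hjat : (swapSeq (⟨m, hκ⟩ : Fin (n - 1)) i).1 ⟨m, hmn⟩ = i.1 ⟨m + 1, hm⟩ := by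
      show i.1 (Equiv.swap (pos0 (⟨m, hκ⟩ : Fin (n - 1))) (pos1 ⟨m, hκ⟩) (pos0 ⟨m, hκ⟩)) = _
      rw [Equiv.swap_apply_left]
      rfl
    have hjlt : ∀ (r : ℕ) (hr : r < m),
        (swapSeq (⟨m, hκ⟩ : Fin (n - 1)) i).1 ⟨r, hr.trans hmn⟩ =
          i.1 ⟨r, (hr.trans (Nat.lt_succ_self m)).trans hm⟩ := by
      intro r hr
      show i.1 (Equiv.swap (pos0 (⟨m, hκ⟩ : Fin (n - 1))) (pos1 ⟨m, hκ⟩) ⟨r, hr.trans hmn⟩) = _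
      rw [Equiv.swap_apply_of_ne_of_ne]
      · exact Fin.ne_of_val_ne (show r ≠ m by omega)
      · exact Fin.ne_of_val_ne (show r ≠ m + 1 by omega)
    have hej : e K (swapSeq (⟨m, hκ⟩ : Fin (n - 1)) i) = 0 := by
      apply IH hmn
      · rw [hjat]; exact h0
      · intro r hr
        rw [hjat, hjlt r hr]
        exact hsep r (hr.trans (Nat.lt_succ_self m))
    have h1 : e K i = p K ⟨m, hκ⟩ * (p K ⟨m, hκ⟩ * e K i) := by
      rw [sq_e, hquad]
      rfl
    rw [h1, p_mul_e, hej, zero_mul, mul_zero]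

/-- The residues of any prefix of a sequence with `e(i) ≠ 0` form an interval
`[-c, d]` in `ℤ/n` containing `0`. -/
lemma prefix_interval (hn0 : 0 < n) (i : KLRSeq n) (hne : e K i ≠ 0) :
    ∀ l : ℕ, 1 ≤ l → l ≤ n →
      ∃ c d : ℕ, c + d + 1 = l ∧
        (∀ x : ℤ, -(c : ℤ) ≤ x → x ≤ (d : ℤ) →
          ∃ r : Fin n, r.val < l ∧ i.1 r = (x : ZMod n)) ∧
        (∀ r : Fin n, r.val < l →
          ∃ x : ℤ, -(c : ℤ) ≤ x ∧ x ≤ (d : ℤ) ∧ i.1 r = (x : ZMod n)) := by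
  have hinj := i.2.injective
  intro l
  induction l with
  | zero => intro h; exact absurd h (by omega)
  | succ l IH =>
    intro _ hln
    rcases Nat.eq_zero_or_pos l with rfl | hl1
    · have h00 : i.1 ⟨0, hn0⟩ = 0 := by
        by_contra h
        exact hne (e_zero_of_ne0 hn0 i h)
      refine ⟨0, 0, rfl, ?_, ?_⟩
      · intro x hx1 hx2
        have hx0 : x = 0 := by omega
        subst hx0
        exact ⟨⟨0, hn0⟩, Nat.lt_succ_self 0, by rw [h00]; simp⟩
      · intro r hr
        have hr0 : r = ⟨0, hn0⟩ := Fin.ext (show r.val = 0 by omega)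
        exact ⟨0, by omega, by omega, by rw [hr0, h00]; simp⟩
    · obtain ⟨c, d, hsum, hfw, hbw⟩ := IH hl1 (by omega)
      have hln' : l < n := by omega
      by_cases hv1 : i.1 ⟨l, hln'⟩ = (((d : ℤ) + 1 : ℤ) : ZMod n)
      · refine ⟨c, d + 1, by omega, ?_, ?_⟩
        · intro x hx1 hx2
          by_cases hxd : x ≤ (d : ℤ)
          · obtain ⟨r, hrl, hrx⟩ := hfw x hx1 hxd
            exact ⟨r, by omega, hrx⟩
          · have hxe : x = (d : ℤ) + 1 := by push_cast at hx2; omega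
            refine ⟨⟨l, hln'⟩, Nat.lt_succ_self l, ?_⟩
            rw [hxe]; exact hv1
        · intro r hrl
          by_cases hrl' : r.val < l
          · obtain ⟨x, h1, h2, h3⟩ := hbw r hrl'
            exact ⟨x, h1, by push_cast; omega, h3⟩
          · have hre : r = ⟨l, hln'⟩ := Fin.ext (show r.val = l by omega)
            refine ⟨(d : ℤ) + 1, by omega, by push_cast; omega, ?_⟩
            rw [hre]; exact hv1
      · by_cases hv2 : i.1 ⟨l, hln'⟩ = ((-(c : ℤ) - 1 : ℤ) : ZMod n)
        · refine ⟨c + 1, d, by omega, ?_, ?_⟩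
          · intro x hx1 hx2
            by_cases hxc : -(c : ℤ) ≤ x
            · obtain ⟨r, hrl, hrx⟩ := hfw x hxc hx2
              exact ⟨r, by omega, hrx⟩
            · have hxe : x = -(c : ℤ) - 1 := by push_cast at hx1; omega
              refine ⟨⟨l, hln'⟩, Nat.lt_succ_self l, ?_⟩
              rw [hxe]; exact hv2
          · intro r hrl
            by_cases hrl' : r.val < l
            · obtain ⟨x, h1, h2, h3⟩ := hbw r hrl'
              exact ⟨x, by push_cast; omega, h2, h3⟩
            · have hre : r = ⟨l, hln'⟩ := Fin.ext (show r.val = l by omega)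
              refine ⟨-(c : ℤ) - 1, by push_cast; omega, by omega, ?_⟩
              rw [hre]; exact hv2
        · exfalso
          apply hne
          apply e_zero_of_isolated l hln' i
          · obtain ⟨r0, hr0l, hr0⟩ := hfw 0 (by omega) (by omega)
            intro h
            have hh : i.1 ⟨l, hln'⟩ = i.1 r0 := by rw [h, hr0]; simp
            have hv : l = r0.val := congrArg Fin.val (hinj hh)
            omega
          · intro r hr
            obtain ⟨x, hx1, hx2, hx3⟩ := hbw ⟨r, hr.trans hln'⟩ hr
            constructor
            · intro hcon
              by_cases hxd : x + 1 ≤ (d : ℤ)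
              · obtain ⟨r', hr'l, hr'⟩ := hfw (x + 1) (by omega) hxd
                have hh : i.1 ⟨l, hln'⟩ = i.1 r' := by
                  push_cast at hr'
                  rw [hcon, hx3, hr']
                have hv : l = r'.val := congrArg Fin.val (hinj hh)
                omega
              · have hxd' : x = (d : ℤ) := by omega
                apply hv1
                rw [hcon, hx3, hxd']
                push_cast
                ring
            · intro hcon
              by_cases hxc : -(c : ℤ) ≤ x - 1
              · obtain ⟨r', hr'l, hr'⟩ := hfw (x - 1) hxc (by omega)
                have hh : i.1 ⟨l, hln'⟩ = i.1 r' := by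
                  push_cast at hr'
                  rw [hr']
                  have hx3' : (x : ZMod n) = i.1 ⟨l, hln'⟩ + 1 := by rw [← hx3, hcon]
                  rw [hx3']
                  ring
                have hv : l = r'.val := congrArg Fin.val (hinj hh)
                omega
              · have hxc' : x = -(c : ℤ) := by omega
                apply hv2
                have hx3' : (x : ZMod n) = i.1 ⟨l, hln'⟩ + 1 := by rw [← hx3, hcon]
                have : i.1 ⟨l, hln'⟩ = (x : ZMod n) - 1 := by rw [hx3']; ring
                rw [this, hxc']
                push_cast
                ring

lemma y_mul_e_eq_zero (hn2 : 2 ≤ n) :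
    ∀ m : ℕ, ∀ hmn : m + 1 < n, ∀ i : KLRSeq n,
      y K ⟨m, Nat.lt_of_succ_lt hmn⟩ * e K i = 0 := by
  intro m
  induction m using Nat.strong_induction_on with
  | _ m IH =>
    intro hmn i
    by_cases he : e K i = 0
    · rw [he, mul_zero]
    have hn0 : 0 < n := by omega
    have hinj := i.2.injective
    have hi0 : i.1 ⟨0, hn0⟩ = 0 := by
      by_contra h; exact he (e_zero_of_ne0 hn0 i h)
    rcases Nat.eq_zero_or_pos m with rfl | hm1
    · have h := mk_rel (K := K) (Rel.cyc0 hn0 i hi0)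
      rw [map_mul, map_zero] at h
      exact h
    -- now m ≥ 1
    have hκ : m - 1 < n - 1 := by omega
    have hposm : pos1 (⟨m - 1, hκ⟩ : Fin (n - 1)) = (⟨m, Nat.lt_of_succ_lt hmn⟩ : Fin n) :=
      Fin.ext (show m - 1 + 1 = m by omega)
    have hb0 : i.1 (pos1 (⟨m - 1, hκ⟩ : Fin (n - 1))) ≠ 0 := by
      intro h
      have hh : i.1 (pos1 (⟨m - 1, hκ⟩ : Fin (n - 1))) = i.1 ⟨0, hn0⟩ := by rw [h, hi0]
      have hv : m - 1 + 1 = 0 := congrArg Fin.val (hinj hh)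
      omega
    -- values at swapped sequence
    have hmn' : m - 1 < n := by omega
    have hjat : (swapSeq (⟨m - 1, hκ⟩ : Fin (n - 1)) i).1 ⟨m - 1, hmn'⟩ =
        i.1 (pos1 (⟨m - 1, hκ⟩ : Fin (n - 1))) := by
      show i.1 (Equiv.swap (pos0 (⟨m - 1, hκ⟩ : Fin (n - 1))) (pos1 ⟨m - 1, hκ⟩)
        (pos0 ⟨m - 1, hκ⟩)) = _
      rw [Equiv.swap_apply_left]
    have hjlt : ∀ (r : ℕ) (hr : r < m - 1),
        (swapSeq (⟨m - 1, hκ⟩ : Fin (n - 1)) i).1 ⟨r, hr.trans hmn'⟩ =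
          i.1 ⟨r, hr.trans hmn'⟩ := by
      intro r hr
      show i.1 (Equiv.swap (pos0 (⟨m - 1, hκ⟩ : Fin (n - 1))) (pos1 ⟨m - 1, hκ⟩)
        ⟨r, hr.trans hmn'⟩) = _
      rw [Equiv.swap_apply_of_ne_of_ne]
      · exact Fin.ne_of_val_ne (show r ≠ m - 1 by omega)
      · exact Fin.ne_of_val_ne (show r ≠ m - 1 + 1 by omega)
    obtain ⟨c, d, hsum, hfw, hbw⟩ := prefix_interval hn0 i he m hm1 (by omega)
    have hy0 : y K (pos0 (⟨m - 1, hκ⟩ : Fin (n - 1))) * e K i = 0 :=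
      IH (m - 1) (by omega) (by omega) i
    by_cases hba : i.1 (pos1 (⟨m - 1, hκ⟩ : Fin (n - 1))) =
        i.1 (pos0 (⟨m - 1, hκ⟩ : Fin (n - 1))) + 1
    · by_cases hab : i.1 (pos0 (⟨m - 1, hκ⟩ : Fin (n - 1))) =
          i.1 (pos1 (⟨m - 1, hκ⟩ : Fin (n - 1))) + 1
      · -- impossible: would give 2 = 0 in ZMod n with n ≥ 3
        exfalso
        have h3 : i.1 (pos1 (⟨m - 1, hκ⟩ : Fin (n - 1))) =
            i.1 (pos1 (⟨m - 1, hκ⟩ : Fin (n - 1))) + 2 := by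
          linear_combination hba + hab
        have h2 : ((2 : ℤ) : ZMod n) = 0 := by push_cast; linear_combination -h3
        haveI : NeZero n := ⟨by omega⟩
        have hdvd : (n : ℤ) ∣ 2 := (ZMod.intCast_zmod_eq_zero_iff_dvd _ _).mp h2
        have := Int.le_of_dvd (by norm_num) hdvd
        omega
      · -- case i_{m-1} → i_m
        have hej : e K (swapSeq (⟨m - 1, hκ⟩ : Fin (n - 1)) i) = 0 := by
          apply e_zero_of_isolated (m - 1) hmn'
          · rw [hjat]; exact hb0
          · intro r hr
            rw [hjat, hjlt r hr]
            constructor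
            · intro hcon
              have hh : i.1 ⟨r, hr.trans hmn'⟩ = i.1 (pos0 (⟨m - 1, hκ⟩ : Fin (n - 1))) := by
                linear_combination hba - hcon
              have hv : r = m - 1 := congrArg Fin.val (hinj hh)
              omega
            · intro hcon
              obtain ⟨x, hx1, hx2, hx3⟩ := hbw ⟨r, hr.trans hmn'⟩ (by
                show r < m; omega)
              obtain ⟨x', hx1', hx2', hx3'⟩ := hbw (pos0 (⟨m - 1, hκ⟩ : Fin (n - 1))) (by
                show m - 1 < m; omega)
              have hc : ((x - x' - 2 : ℤ) : ZMod n) = 0 := by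
                push_cast
                linear_combination -hx3 + hx3' + hcon + hba
              haveI : NeZero n := ⟨by omega⟩
              have hdvd : (n : ℤ) ∣ (x - x' - 2) :=
                (ZMod.intCast_zmod_eq_zero_iff_dvd _ _).mp hc
              have hz : x - x' - 2 = 0 := int_small hdvd (by omega) (by omega)
              obtain ⟨r'', hr''lt, hr''⟩ := hfw (x - 1) (by omega) (by omega)
              have hh : i.1 r'' = i.1 (pos1 (⟨m - 1, hκ⟩ : Fin (n - 1))) := by
                rw [hr'']
                push_cast
                linear_combination -hx3 + hcon
              have hv : r''.val = m - 1 + 1 := congrArg Fin.val (hinj hh)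
              omega
        have hquad2 : quadTerm K (⟨m - 1, hκ⟩ : Fin (n - 1)) i =
            (Y K (pos1 ⟨m - 1, hκ⟩) - Y K (pos0 ⟨m - 1, hκ⟩)) * E K i := by
          simp only [quadTerm]
          rw [if_neg (fun h => hab h.2), if_pos ⟨hba, hab⟩]
        have h2 : p K ⟨m - 1, hκ⟩ * (p K ⟨m - 1, hκ⟩ * e K i) =
            y K (pos1 (⟨m - 1, hκ⟩ : Fin (n - 1))) * e K i -
              y K (pos0 (⟨m - 1, hκ⟩ : Fin (n - 1))) * e K i := by
          have h := sq_e (K := K) (⟨m - 1, hκ⟩ : Fin (n - 1)) i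
          rw [hquad2, map_mul, map_sub, sub_mul] at h
          exact h
        have h5 : p K (⟨m - 1, hκ⟩ : Fin (n - 1)) * (p K ⟨m - 1, hκ⟩ * e K i) = 0 := by
          rw [p_mul_e, hej, zero_mul, mul_zero]
        have h6 : y K (pos1 (⟨m - 1, hκ⟩ : Fin (n - 1))) * e K i = 0 := by
          have h7 := h2.symm.trans h5
          rwa [hy0, sub_zero] at h7
        rw [← hposm]
        exact h6
    · by_cases hab : i.1 (pos0 (⟨m - 1, hκ⟩ : Fin (n - 1))) =
          i.1 (pos1 (⟨m - 1, hκ⟩ : Fin (n - 1))) + 1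
      · -- case i_{m-1} ← i_m
        have hej : e K (swapSeq (⟨m - 1, hκ⟩ : Fin (n - 1)) i) = 0 := by
          apply e_zero_of_isolated (m - 1) hmn'
          · rw [hjat]; exact hb0
          · intro r hr
            rw [hjat, hjlt r hr]
            constructor
            · intro hcon
              obtain ⟨x, hx1, hx2, hx3⟩ := hbw ⟨r, hr.trans hmn'⟩ (by
                show r < m; omega)
              obtain ⟨x', hx1', hx2', hx3'⟩ := hbw (pos0 (⟨m - 1, hκ⟩ : Fin (n - 1))) (by
                show m - 1 < m; omega)
              have hc : ((x' - x - 2 : ℤ) : ZMod n) = 0 := by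
                push_cast
                linear_combination hx3 - hx3' + hab + hcon
              haveI : NeZero n := ⟨by omega⟩
              have hdvd : (n : ℤ) ∣ (x' - x - 2) :=
                (ZMod.intCast_zmod_eq_zero_iff_dvd _ _).mp hc
              have hz : x' - x - 2 = 0 := int_small hdvd (by omega) (by omega)
              obtain ⟨r'', hr''lt, hr''⟩ := hfw (x + 1) (by omega) (by omega)
              have hh : i.1 r'' = i.1 (pos1 (⟨m - 1, hκ⟩ : Fin (n - 1))) := by
                rw [hr'']
                push_cast
                linear_combination -hx3 - hcon
              have hv : r''.val = m - 1 + 1 := congrArg Fin.val (hinj hh)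
              omega
            · intro hcon
              have hh : i.1 ⟨r, hr.trans hmn'⟩ = i.1 (pos0 (⟨m - 1, hκ⟩ : Fin (n - 1))) := by
                linear_combination hcon - hab
              have hv : r = m - 1 := congrArg Fin.val (hinj hh)
              omega
        have hquad3 : quadTerm K (⟨m - 1, hκ⟩ : Fin (n - 1)) i =
            (Y K (pos0 ⟨m - 1, hκ⟩) - Y K (pos1 ⟨m - 1, hκ⟩)) * E K i := by
          simp only [quadTerm]
          rw [if_neg (fun h => hba h.1), if_neg (fun h => hba h.1), if_pos ⟨hab, hba⟩]
        have h2 : p K ⟨m - 1, hκ⟩ * (p K ⟨m - 1, hκ⟩ * e K i) =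
            y K (pos0 (⟨m - 1, hκ⟩ : Fin (n - 1))) * e K i -
              y K (pos1 (⟨m - 1, hκ⟩ : Fin (n - 1))) * e K i := by
          have h := sq_e (K := K) (⟨m - 1, hκ⟩ : Fin (n - 1)) i
          rw [hquad3, map_mul, map_sub, sub_mul] at h
          exact h
        have h5 : p K (⟨m - 1, hκ⟩ : Fin (n - 1)) * (p K ⟨m - 1, hκ⟩ * e K i) = 0 := by
          rw [p_mul_e, hej, zero_mul, mul_zero]
        have h6 : y K (pos1 (⟨m - 1, hκ⟩ : Fin (n - 1))) * e K i = 0 := by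
          have h7 := h2.symm.trans h5
          rw [hy0, zero_sub] at h7
          exact neg_eq_zero.mp h7
        rw [← hposm]
        exact h6
      · -- non-adjacent case
        have hquadE : quadTerm K (⟨m - 1, hκ⟩ : Fin (n - 1)) i = E K i := by
          simp only [quadTerm]
          rw [if_neg (fun h => hba h.1), if_neg (fun h => hba h.1),
            if_neg (fun h => hab h.1)]
        have h1 : e K i = p K ⟨m - 1, hκ⟩ * (p K ⟨m - 1, hκ⟩ * e K i) := by
          rw [sq_e, hquadE]
          rfl
        have hy0j : y K (pos0 (⟨m - 1, hκ⟩ : Fin (n - 1))) *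
            e K (swapSeq (⟨m - 1, hκ⟩ : Fin (n - 1)) i) = 0 :=
          IH (m - 1) (by omega) (by omega) _
        rw [← hposm, h1, p_mul_e,
          ← mul_assoc (p K ⟨m - 1, hκ⟩) (e K (swapSeq ⟨m - 1, hκ⟩ i)) (p K ⟨m - 1, hκ⟩),
          ← mul_assoc, ypsi_e, hy0j, mul_zero, zero_mul]

end KLR

/-- for `n ≥ 2` and `i ∈ I_n` with `e(i) ≠ 0` in `R_n`, `y_k e(i) = 0` for
all (1-based) `1 ≤ k ≤ n−1`, i.e. for all 0-based positions `k` with `k + 1 < n`. -/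
theorem stmt_8 (K : Type) [Field K] (n : ℕ) (hn : 2 ≤ n) (i : KLRSeq n)
    (h : KLR.e K i ≠ 0) (k : Fin n) (hk : k.val + 1 < n) :
    KLR.y K k * KLR.e K i = 0 := by
  exact KLR.y_mul_e_eq_zero hn k.val hk i
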